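/- Let h : ℝ → ℝ be smooth with 0 < R₁ < R₂ such that h'(r) = 0 for r ≤ R₁ and h'(r) = 1 for r ≥ R₂. Let g : (0,∞) → ℝ be smooth, let c ∈ ℝ, and assume lim_{r→∞} r·g(r) = c and that there is C > 0 with |d/dr (r·g(r))| ≤ C·r^(−2) for all r ≥ R₁. Set f(x) = g(|x|) for x ≠ 0 and define I(x) = f(x)·( (2h'(|x|)/|x|)·f(x) + 2h'(|x|)·(x/|x|)·∇f(x) + h''(|x|)·f(x) ), which vanishes for |x| ≤ R₁. Then I is absolutely integrable on ℝ³ and ∫_{ℝ³} I(x) dx = 4π·c². -/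

import Mathlib

open MeasureTheory Real Filter

noncomputable section

/-- ℝ³ as a Euclidean space. -/
abbrev E3 := EuclideanSpace ℝ (Fin 3)

/-- The integrand `I = f · L₁ f` for the radial function `f(x) = g(|x|)`, where
`L₁ = 2h'(r)/r + 2h'(r)∂_r + h''(r)` and `∂_r f(x) = (x/|x|)·∇f(x)`. -/
def radL1 (h g : ℝ → ℝ) (x : E3) : ℝ :=
  g ‖x‖ * ((2 * deriv h ‖x‖ / ‖x‖) * g ‖x‖
    + 2 * deriv h ‖x‖ * (inner ℝ (‖x‖⁻¹ • x) (gradient (fun y : E3 => g ‖y‖) x) : ℝ)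
    + deriv (deriv h) ‖x‖ * g ‖x‖)

lemma grad_radial {g : ℝ → ℝ} {g' : ℝ} {x : E3} (hx : x ≠ 0)
    (hgd : HasDerivAt g g' ‖x‖) :
    HasGradientAt (fun y : E3 => g ‖y‖) (g' • (‖x‖⁻¹ • x)) x := by
  have hn : (0:ℝ) < ‖x‖ := norm_pos_iff.mpr hx
  rw [hasGradientAt_iff_hasFDerivAt]
  have h1 : HasFDerivAt (fun y : E3 => ‖y‖ ^ 2) (2 • (innerSL ℝ x)) x :=
    (hasStrictFDerivAt_norm_sq x).hasFDerivAt
  have h2 : HasDerivAt Real.sqrt (1 / (2 * Real.sqrt (‖x‖^2))) (‖x‖^2) :=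
    Real.hasDerivAt_sqrt (by positivity)
  have h3 : HasFDerivAt (fun y : E3 => Real.sqrt (‖y‖^2))
      ((1 / (2 * Real.sqrt (‖x‖^2))) • (2 • (innerSL ℝ x))) x :=
    h2.comp_hasFDerivAt x h1
  have h4 : HasFDerivAt (fun y : E3 => ‖y‖)
      ((1 / (2 * Real.sqrt (‖x‖^2))) • (2 • (innerSL ℝ x))) x := by
    convert h3 using 2 with y
    rw [Real.sqrt_sq (norm_nonneg y)]
  have h5 : HasFDerivAt (fun y : E3 => g ‖y‖)
      (g' • ((1 / (2 * Real.sqrt (‖x‖^2))) • (2 • (innerSL ℝ x)))) x :=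
    hgd.comp_hasFDerivAt x h4
  refine h5.congr_fderiv ?_
  ext y
  simp only [InnerProductSpace.toDual_apply_apply, ContinuousLinearMap.smul_apply,
    ContinuousLinearMap.coe_smul', Pi.smul_apply, innerSL_apply_apply, smul_eq_mul,
    real_inner_smul_left, Real.sqrt_sq (norm_nonneg x)]
  ring

lemma inner_grad_radial {g : ℝ → ℝ} {x : E3} (hx : x ≠ 0)
    (hgd : HasDerivAt g (deriv g ‖x‖) ‖x‖) :
    (inner ℝ (‖x‖⁻¹ • x) (gradient (fun y : E3 => g ‖y‖) x) : ℝ) = deriv g ‖x‖ := by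
  have hn : (0:ℝ) < ‖x‖ := norm_pos_iff.mpr hx
  rw [(grad_radial hx hgd).gradient]
  rw [real_inner_smul_left, real_inner_smul_right, real_inner_smul_right,
    real_inner_self_eq_norm_sq]
  field_simp

lemma vol_ball3 : (volume (Metric.ball (0:E3) 1)).toReal = π * (4/3) := by
  rw [EuclideanSpace.volume_ball]
  have h1 : Real.Gamma ((Fintype.card (Fin 3) : ℝ)/2 + 1) = 3/4 * Real.sqrt π := by
    have e1 : ((Fintype.card (Fin 3) : ℝ))/2 + 1 = 3/2 + 1 := by
      norm_num [Fintype.card_fin]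
    rw [e1, Real.Gamma_add_one (by norm_num)]
    have e2 : (3/2 : ℝ) = 1/2 + 1 := by norm_num
    rw [e2, Real.Gamma_add_one (by norm_num), Real.Gamma_one_half_eq]
    ring
  rw [h1]
  have hs : Real.sqrt π ^ Fintype.card (Fin 3) = π * Real.sqrt π := by
    rw [Fintype.card_fin, pow_succ, sq, Real.mul_self_sqrt Real.pi_nonneg]
  rw [hs]
  have hne : Real.sqrt π ≠ 0 := by positivity
  have : π * Real.sqrt π / (3/4 * Real.sqrt π) = π * (4/3) := by
    field_simp
  rw [this]
  simp [ENNReal.toReal_ofReal (by positivity : (0:ℝ) ≤ π * (4/3))]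

/-- Let `h` be smooth with `h' = 0` on `r ≤ R₁` and `h' = 1` on `r ≥ R₂`, and let
`g` be smooth on `(0,∞)` with `r g(r) → c` as `r → ∞` and `|d/dr (r g(r))| ≤ C r⁻²`
for `r ≥ R₁`. Then `f·L₁f` (with `f(x) = g(|x|)`) is integrable on ℝ³ and its
integral is `4π c²`: it depends only on the leading coefficient of `f ∼ c/|x|`. -/
theorem stmt11 (h : ℝ → ℝ) (hh : ContDiff ℝ (⊤ : ℕ∞) h) (R₁ R₂ : ℝ)
    (hR₁ : 0 < R₁) (hR₁₂ : R₁ < R₂)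
    (hflat : ∀ r : ℝ, r ≤ R₁ → deriv h r = 0)
    (hone : ∀ r : ℝ, R₂ ≤ r → deriv h r = 1)
    (g : ℝ → ℝ) (hg : ContDiffOn ℝ (⊤ : ℕ∞) g (Set.Ioi 0)) (c : ℝ)
    (hlim : Tendsto (fun r : ℝ => r * g r) atTop (nhds c))
    (hder : ∃ C : ℝ, 0 < C ∧ ∀ r : ℝ, R₁ ≤ r →
      |deriv (fun s : ℝ => s * g s) r| ≤ C / r ^ 2) :
    Integrable (fun x : E3 => radL1 h g x) ∧
    ∫ x : E3, radL1 h g x = 4 * Real.pi * c ^ 2 := by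
  obtain ⟨C, hC, hCb⟩ := hder
  have hh : ContDiff ℝ ((⊤:ℕ∞):WithTop ℕ∞) h := hh.of_le (by simp)
  have hg : ContDiffOn ℝ ((⊤:ℕ∞):WithTop ℕ∞) g (Set.Ioi 0) := hg.of_le (by simp)
  have hR₂ : (0:ℝ) < R₂ := hR₁.trans hR₁₂
  -- basic smoothness facts about h
  have hd1 : Differentiable ℝ h := (contDiff_infty_iff_deriv.mp hh).1
  have hd2 : ContDiff ℝ ((⊤:ℕ∞):WithTop ℕ∞) (deriv h) := (contDiff_infty_iff_deriv.mp hh).2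
  have hd3 : Differentiable ℝ (deriv h) := (contDiff_infty_iff_deriv.mp hd2).1
  have hc1 : Continuous (deriv h) := hd2.continuous
  have hd4 : Continuous (deriv (deriv h)) := (contDiff_infty_iff_deriv.mp hd2).2.continuous
  -- second derivative of h vanishes on r ≤ R₁ and r > R₂
  have hdd0' : ∀ r : ℝ, r < R₁ → deriv (deriv h) r = 0 := by
    intro r hr
    have hev : deriv h =ᶠ[nhds r] fun _ => (0:ℝ) :=
      Filter.eventually_of_mem (Iio_mem_nhds hr) (fun s hs => hflat s (le_of_lt hs))
    rw [hev.deriv_eq, deriv_const]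
  have hdd0 : ∀ r : ℝ, r ≤ R₁ → deriv (deriv h) r = 0 := by
    intro r hr
    rcases lt_or_eq_of_le hr with hr' | rfl
    · exact hdd0' r hr'
    · have t1 : Tendsto (deriv (deriv h)) (nhdsWithin r (Set.Iio r))
          (nhds (deriv (deriv h) r)) := (hd4.continuousAt).continuousWithinAt
      have t2 : Tendsto (deriv (deriv h)) (nhdsWithin r (Set.Iio r)) (nhds 0) := by
        apply Tendsto.congr' _ tendsto_const_nhds
        filter_upwards [self_mem_nhdsWithin] with s hs
        exact (hdd0' s hs).symm
      exact tendsto_nhds_unique t1 t2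
  have hddtop : ∀ r : ℝ, R₂ < r → deriv (deriv h) r = 0 := by
    intro r hr
    have hev : deriv h =ᶠ[nhds r] fun _ => (1:ℝ) :=
      Filter.eventually_of_mem (Ioi_mem_nhds hr) (fun s hs => hone s (le_of_lt hs))
    rw [hev.deriv_eq, deriv_const]
  -- facts about g
  have hgc : ContinuousOn g (Set.Ioi 0) := hg.continuousOn
  have hg'c : ContinuousOn (deriv g) (Set.Ioi 0) := by
    exact hg.continuousOn_deriv_of_isOpen isOpen_Ioi
      (by exact_mod_cast (le_top : (1:ℕ∞) ≤ ⊤))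
  have hgd : ∀ r : ℝ, 0 < r → HasDerivAt g (deriv g r) r := by
    intro r hr
    have : DifferentiableAt ℝ g r :=
      ((hg.differentiableOn (by simp)).differentiableAt (Ioi_mem_nhds hr))
    exact this.hasDerivAt
  -- w = r g r
  set w : ℝ → ℝ := fun s => s * g s with hw_def
  have hwd : ∀ r : ℝ, 0 < r → HasDerivAt w (g r + r * deriv g r) r := by
    intro r hr
    have := (hasDerivAt_id' r).fun_mul (hgd r hr)
    simpa [hw_def, add_comm] using this
  have hwderiv : ∀ r : ℝ, 0 < r → deriv w r = g r + r * deriv g r := by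
    intro r hr; exact (hwd r hr).deriv
  have hw'b : ∀ r : ℝ, R₁ ≤ r → |g r + r * deriv g r| ≤ C / r ^ 2 := by
    intro r hr
    have := hCb r hr
    rwa [hwderiv r (hR₁.trans_le hr)] at this
  have hwc : ContinuousOn w (Set.Ioi 0) := (continuousOn_id).mul hgc
  -- bound on |w| on [R₁, ∞)
  obtain ⟨M, hM0, hMb⟩ : ∃ M : ℝ, 0 < M ∧ ∀ r : ℝ, R₁ ≤ r → |w r| ≤ M := by
    have hev : ∀ᶠ r in atTop, |w r| ≤ |c| + 1 := by
      filter_upwards [hlim (Metric.ball_mem_nhds c one_pos)] with r hr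
      have h1 : |w r - c| < 1 := by simpa [Real.dist_eq] using hr
      have h2 : |w r| ≤ |w r - c| + |c| := by
        calc |w r| = |(w r - c) + c| := by ring_nf
          _ ≤ |w r - c| + |c| := abs_add_le _ _
      linarith
    obtain ⟨A, hA⟩ := hev.exists_forall_of_atTop
    obtain ⟨B, hB⟩ := (isCompact_Icc (a := R₁) (b := max A R₁)).exists_bound_of_continuousOn
      (hwc.mono (fun y hy => lt_of_lt_of_le hR₁ hy.1))
    refine ⟨max (max B (|c|+1)) 1, lt_of_lt_of_le one_pos (le_max_right _ _), ?_⟩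
    intro r hr
    by_cases hrA : r ≤ max A R₁
    · have := hB r ⟨hr, hrA⟩
      rw [Real.norm_eq_abs] at this
      exact this.trans ((le_max_left _ _).trans (le_max_left _ _))
    · push_neg at hrA
      have := hA r ((le_max_left A R₁).trans hrA.le)
      exact this.trans ((le_max_right _ _).trans (le_max_left _ _))
  -- the radial profile
  set ex : ℝ → ℝ := fun r => g r * (2 * deriv h r / r * g r
      + 2 * deriv h r * deriv g r + deriv (deriv h) r * g r) with hex_def
  set F : ℝ → ℝ := fun r => if r ≤ R₁ then 0 else ex r with hF_def
  have hexc : ContinuousOn ex (Set.Ioi 0) := by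
    apply hgc.mul
    apply ContinuousOn.add
    apply ContinuousOn.add
    · exact ((((continuous_const.mul hc1).continuousOn).div continuousOn_id
        (fun r hr => ne_of_gt hr)).mul hgc)
    · exact ((continuous_const.mul hc1).continuousOn).mul hg'c
    · exact (hd4.continuousOn).mul hgc
  have hex0 : ex R₁ = 0 := by
    simp [hex_def, hflat R₁ le_rfl, hdd0 R₁ le_rfl]
  have hFeq : ∀ r : ℝ, R₁ < r → F r = ex r := fun r hr => if_neg (not_le.mpr hr)
  have hF0 : ∀ r : ℝ, r ≤ R₁ → F r = 0 := fun r hr => if_pos hr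
  -- continuity of F
  have hFcont : Continuous F := by
    rw [continuous_iff_continuousAt]
    intro r
    rcases lt_trichotomy r R₁ with hr | rfl | hr
    · have hev : F =ᶠ[nhds r] fun _ => (0:ℝ) :=
        Filter.eventually_of_mem (Iio_mem_nhds hr) (fun s hs => hF0 s (le_of_lt hs))
      exact ContinuousAt.congr (continuousAt_const) hev.symm
    · have hexat : ContinuousAt ex r := hexc.continuousAt (Ioi_mem_nhds hR₁)
      have habs : Tendsto (fun s => |ex s|) (nhds r) (nhds 0) := by
        have := hexat.tendsto.abs
        rwa [hex0, abs_zero] at this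
      have hneg : Tendsto (fun s => -|ex s|) (nhds r) (nhds 0) := by
        simpa using habs.neg
      have hFR : F r = 0 := hF0 r le_rfl
      unfold ContinuousAt
      rw [hFR]
      refine tendsto_of_tendsto_of_tendsto_of_le_of_le hneg habs ?_ ?_
      · intro s
        by_cases hs : s ≤ r
        · simp [hF0 s hs]
        · rw [hFeq s (not_le.mp hs)]; exact neg_abs_le _
      · intro s
        by_cases hs : s ≤ r
        · simp [hF0 s hs]
        · rw [hFeq s (not_le.mp hs)]; exact le_abs_self _
    · have hev : F =ᶠ[nhds r] ex :=
        Filter.eventually_of_mem (Ioi_mem_nhds hr) (fun s hs => hFeq s hs)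
      exact ContinuousAt.congr (hexc.continuousAt (Ioi_mem_nhds (hR₁.trans hr))) hev.symm
  -- radL1 = F ∘ norm
  have hrad : ∀ x : E3, radL1 h g x = F ‖x‖ := by
    intro x
    by_cases hx : ‖x‖ ≤ R₁
    · rw [hF0 _ hx]
      simp [radL1, hflat _ hx, hdd0 _ hx]
    · push_neg at hx
      have hx0 : x ≠ 0 := by
        intro hx0; rw [hx0] at hx; simp at hx; linarith
      rw [hFeq _ hx, radL1, inner_grad_radial hx0 (hgd _ (hR₁.trans hx))]
  -- the key algebraic identity
  have hkey : ∀ r : ℝ, R₁ < r → r ^ 2 * F r =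
      deriv (deriv h) r * w r ^ 2 + deriv h r * (2 * w r * (g r + r * deriv g r)) := by
    intro r hr
    have hr0 : (0:ℝ) < r := hR₁.trans hr
    rw [hFeq r hr]
    simp only [hex_def, hw_def]
    field_simp
    ring
  -- G and its derivative
  set G : ℝ → ℝ := fun r => deriv h r * w r ^ 2 with hG_def
  have hG' : ∀ r ∈ Set.Ioi R₁, HasDerivAt G (r ^ 2 * F r) r := by
    intro r hr
    have hr0 : (0:ℝ) < r := hR₁.trans hr
    have h1 := ((hd3 r).hasDerivAt).fun_mul ((hwd r hr0).fun_pow 2)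
    rw [hkey r hr]
    refine h1.congr_deriv ?_
    ring
  -- integrability pieces
  have hmeasF : Continuous fun y : ℝ => y ^ 2 * F y := (continuous_pow 2).mul hFcont
  have hI1 : IntegrableOn (fun y : ℝ => y ^ 2 * F y) (Set.Ioc 0 R₁) := by
    apply (integrableOn_zero (s := Set.Ioc (0:ℝ) R₁)).congr_fun _ measurableSet_Ioc
    intro y hy
    simp [hF0 y hy.2]
  have hI2 : IntegrableOn (fun y : ℝ => y ^ 2 * F y) (Set.Ioc R₁ R₂) :=
    (hmeasF.continuousOn.integrableOn_Icc).mono_set Set.Ioc_subset_Icc_self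
  have hI3 : IntegrableOn (fun y : ℝ => y ^ 2 * F y) (Set.Ioi R₂) := by
    have hint : IntegrableOn (fun y : ℝ => 2 * M * C * y ^ (-2 : ℝ)) (Set.Ioi R₂) :=
      (integrableOn_Ioi_rpow_of_lt (by norm_num) hR₂).const_mul _
    apply Integrable.mono' hint (hmeasF.aestronglyMeasurable.restrict)
    rw [ae_restrict_iff' measurableSet_Ioi]
    apply ae_of_all
    intro y hy
    have hy2 : R₂ < y := hy
    have hy0 : (0:ℝ) < y := hR₂.trans hy2
    have hyR₁ : R₁ < y := hR₁₂.trans hy2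
    rw [Real.norm_eq_abs, hkey y hyR₁, hddtop y hy2, hone y hy2.le]
    have hb1 : |w y| ≤ M := hMb y hyR₁.le
    have hb2 : |g y + y * deriv g y| ≤ C / y ^ 2 := hw'b y hyR₁.le
    have : |0 * w y ^ 2 + 1 * (2 * w y * (g y + y * deriv g y))|
        = 2 * |w y| * |g y + y * deriv g y| := by
      rw [zero_mul, zero_add, one_mul, abs_mul, abs_mul]
      simp [abs_of_nonneg, mul_assoc]
    rw [this]
    have h2 : 2 * |w y| * |g y + y * deriv g y| ≤ 2 * M * (C / y ^ 2) := by
      apply mul_le_mul _ hb2 (abs_nonneg _) (by positivity)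
      nlinarith [abs_nonneg (w y)]
    calc 2 * |w y| * |g y + y * deriv g y| ≤ 2 * M * (C / y ^ 2) := h2
      _ = 2 * M * C * y ^ (-2 : ℝ) := by
          rw [Real.rpow_neg hy0.le]
          rw [show ((2:ℝ)) = ((2:ℕ):ℝ) by norm_num, Real.rpow_natCast]
          ring
  have hI23 : IntegrableOn (fun y : ℝ => y ^ 2 * F y) (Set.Ioi R₁) := by
    rw [← Set.Ioc_union_Ioi_eq_Ioi hR₁₂.le]
    exact hI2.union hI3
  have hIall : IntegrableOn (fun y : ℝ => y ^ 2 * F y) (Set.Ioi 0) := by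
    rw [← Set.Ioc_union_Ioi_eq_Ioi hR₁.le]
    exact hI1.union hI23
  -- the improper integral
  have hGlim : Tendsto G atTop (nhds (c ^ 2)) := by
    have h1 : Tendsto (fun r => w r ^ 2) atTop (nhds (c ^ 2)) := hlim.pow 2
    apply h1.congr'
    filter_upwards [eventually_ge_atTop R₂] with r hr
    simp [hG_def, hone r hr]
  have hGcont : ContinuousWithinAt G (Set.Ici R₁) R₁ := by
    apply ContinuousAt.continuousWithinAt
    exact (hc1.continuousAt).mul (((hwc.continuousAt (Ioi_mem_nhds hR₁))).pow 2)
  have hIoiR₁ : ∫ y in Set.Ioi R₁, y ^ 2 * F y = c ^ 2 := by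
    have := integral_Ioi_of_hasDerivAt_of_tendsto hGcont hG' hI23 hGlim
    rw [this, hG_def]
    simp [hflat R₁ le_rfl]
  have hIoi0 : ∫ y in Set.Ioi 0, y ^ 2 * F y = c ^ 2 := by
    rw [← Set.Ioc_union_Ioi_eq_Ioi hR₁.le,
      setIntegral_union (Set.Ioc_disjoint_Ioi le_rfl) measurableSet_Ioi hI1 hI23]
    rw [hIoiR₁]
    have h0 : ∫ y in Set.Ioc 0 R₁, y ^ 2 * F y = 0 :=
      setIntegral_eq_zero_of_forall_eq_zero (fun y hy => by simp [hF0 y hy.2])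
    rw [h0]; ring
  -- global bound and integrability
  have hradfun : (fun x : E3 => radL1 h g x) = fun x : E3 => F ‖x‖ := funext hrad
  obtain ⟨B, hB⟩ := (isCompact_Icc (a := (0:ℝ)) (b := R₂)).exists_bound_of_continuousOn
    hFcont.continuousOn
  have hBnn : 0 ≤ B := le_trans (norm_nonneg _) (hB 0 ⟨le_rfl, hR₂.le⟩)
  set K : ℝ := max (B * (1+R₂)^4) (2*M*C*(1+1/R₂)^4) with hK_def
  have hbound : ∀ r : ℝ, 0 ≤ r → |F r| * (1+r)^4 ≤ K := by
    intro r hr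
    by_cases hrR : r ≤ R₂
    · have h1 : |F r| ≤ B := by simpa [Real.norm_eq_abs] using hB r ⟨hr, hrR⟩
      have h2 : (1+r)^4 ≤ (1+R₂)^4 := pow_le_pow_left₀ (by linarith) (by linarith) 4
      calc |F r| * (1+r)^4 ≤ B * (1+R₂)^4 := mul_le_mul h1 h2 (by positivity) hBnn
        _ ≤ K := le_max_left _ _
    · push_neg at hrR
      have hr0 : (0:ℝ) < r := hR₂.trans hrR
      have hrR₁ : R₁ < r := hR₁₂.trans hrR
      have hr2 : (0:ℝ) < r^2 := by positivity
      have hFr : r^2 * F r = 2 * w r * (g r + r * deriv g r) := by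
        rw [hkey r hrR₁, hddtop r hrR, hone r hrR.le]; ring
      have hF4 : |F r| ≤ 2*M*C / r^4 := by
        have h5 : r^2 * |F r| ≤ 2*M*C/r^2 := by
          have habs : |r^2 * F r| = r^2 * |F r| := by
            rw [abs_mul, abs_of_nonneg hr2.le]
          rw [← habs, hFr]
          have hb1 : |w r| ≤ M := hMb r hrR₁.le
          have hb2 := hw'b r hrR₁.le
          calc |2 * w r * (g r + r * deriv g r)|
              = 2 * |w r| * |g r + r*deriv g r| := by
                rw [abs_mul, abs_mul, abs_two]
            _ ≤ 2 * M * (C / r^2) := by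
                apply mul_le_mul _ hb2 (abs_nonneg _) (by positivity)
                nlinarith [abs_nonneg (w r)]
            _ = 2*M*C/r^2 := by ring
        rw [le_div_iff₀ (by positivity : (0:ℝ) < r^4)]
        calc |F r| * r^4 = (r^2 * |F r|) * r^2 := by ring
          _ ≤ (2*M*C/r^2) * r^2 := mul_le_mul_of_nonneg_right h5 hr2.le
          _ = 2*M*C := by field_simp
      have hq : (1+r)/r ≤ 1 + 1/R₂ := by
        have h4 : (1:ℝ) ≤ r / R₂ := (one_le_div hR₂).mpr hrR.le
        calc (1+r)/r = 1/r + 1 := by field_simp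
          _ ≤ 1/R₂ + 1 := by
              have := one_div_le_one_div_of_le hR₂ hrR.le
              linarith
          _ = 1 + 1/R₂ := by ring
      have hq4 : ((1+r)/r)^4 ≤ (1+1/R₂)^4 := pow_le_pow_left₀ (by positivity) hq 4
      calc |F r| * (1+r)^4 ≤ (2*M*C/r^4) * (1+r)^4 :=
            mul_le_mul_of_nonneg_right hF4 (by positivity)
        _ = 2*M*C * ((1+r)/r)^4 := by rw [div_pow]; ring
        _ ≤ 2*M*C * (1+1/R₂)^4 := mul_le_mul_of_nonneg_left hq4 (by positivity)
        _ ≤ K := le_max_right _ _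
  have hbound' : ∀ x : E3, ‖F ‖x‖‖ ≤ K * (1 + ‖x‖) ^ (-(4:ℝ)) := by
    intro x
    have hx : (0:ℝ) ≤ ‖x‖ := norm_nonneg x
    have h1 : (0:ℝ) < 1 + ‖x‖ := by linarith
    rw [Real.norm_eq_abs, Real.rpow_neg h1.le,
      show ((4:ℝ)) = ((4:ℕ):ℝ) by norm_num, Real.rpow_natCast,
      ← div_eq_mul_inv, le_div_iff₀ (by positivity)]
    exact hbound ‖x‖ hx
  have hfin4 : (Module.finrank ℝ E3 : ℝ) < 4 := by
    rw [finrank_euclideanSpace_fin]; norm_num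
  have hint : Integrable (fun x : E3 => F ‖x‖) := by
    apply Integrable.mono' ((integrable_one_add_norm hfin4).const_mul K)
      ((hFcont.comp continuous_norm).aestronglyMeasurable) (ae_of_all _ hbound')
  constructor
  · rw [hradfun]; exact hint
  · rw [hradfun, integral_fun_norm_addHaar volume F]
    simp only [finrank_euclideanSpace_fin, measureReal_def, vol_ball3, smul_eq_mul, nsmul_eq_mul]
    have h2 : ∫ y in Set.Ioi (0:ℝ), y ^ (3-1) * F y = c ^ 2 := hIoi0
    rw [h2]
    ring


end
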